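/- arXiv:1702.04611 — 5 statements merged into one kernel-verified Lean document; each statement's English description precedes it below -/
import Mathlib

section
/- Let ε ∈ {1, −1}, p ∈ ℝ, and let f₁, f₂ : ℝ → ℝ be smooth functions with f₁(0) = 1, f₁'(0) = εp, f₁''(0) = −(p² + ε), and f₂(0) = −1, f₂'(0) = −εp, f₂''(0) = p² + ε. Define the quadratic function q(x, z) = (x − p)² + εz². Then for i = 1, 2 the function gᵢ(u) = q(u, fᵢ(u)) − (p² + ε) satisfies gᵢ(0) = gᵢ'(0) = gᵢ''(0) = 0; that is, the conic {q = p² + ε}, whose center (p, 0) is the unique critical point of q, has contact of order at least 3 with the graph of fᵢ at the point (0, fᵢ(0)), for both i = 1 and i = 2. Moreover, the gradient of q vanishes exactly at (p, 0), and the quadratic form (x, z) ↦ x² + εz² is positive definite (so the conic is an ellipse) if ε = 1 and indefinite (so the conic is a hyperbola) if ε = −1. -/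
noncomputable section

lemma deriv_g (ε p c : ℝ) (f : ℝ → ℝ) (hf : ContDiff ℝ (⊤ : ℕ∞) f) :
    deriv (fun u => (u - p) ^ 2 + ε * (f u) ^ 2 - c)
      = fun u => 2 * (u - p) + ε * (2 * f u * deriv f u) := by
  funext u
  have hd : HasDerivAt f (deriv f u) u := (hf.differentiable (by simp) u).hasDerivAt
  have h1 : HasDerivAt (fun u : ℝ => (u - p) ^ 2 + ε * (f u) ^ 2 - c)
      (2 * (u - p) + ε * (2 * f u * deriv f u)) u := by
    have ha : HasDerivAt (fun u : ℝ => (u - p) ^ 2) (2 * (u - p)) u := by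
      simpa using (((hasDerivAt_id u).sub_const p).fun_pow 2)
    have hb : HasDerivAt (fun u : ℝ => ε * (f u) ^ 2) (ε * (2 * f u * deriv f u)) u := by
      simpa [mul_comm, mul_assoc, mul_left_comm] using (hd.pow 2).const_mul ε
    simpa using (ha.add hb).sub_const c
  exact h1.deriv

lemma second_deriv_g (ε p c : ℝ) (f : ℝ → ℝ) (hf : ContDiff ℝ (⊤ : ℕ∞) f) :
    deriv (deriv (fun u => (u - p) ^ 2 + ε * (f u) ^ 2 - c)) 0
      = 2 + ε * (2 * (deriv f 0 * deriv f 0 + f 0 * deriv (deriv f) 0)) := by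
  rw [deriv_g ε p c f hf]
  have hd : HasDerivAt f (deriv f 0) 0 := (hf.differentiable (by simp) 0).hasDerivAt
  have hf' : ContDiff ℝ ((⊤ : ℕ∞) : WithTop ℕ∞) (deriv f) :=
    (contDiff_infty_iff_deriv.mp (hf.of_le (by simp))).2
  have hd' : HasDerivAt (deriv f) (deriv (deriv f) 0) 0 :=
    (hf'.differentiable (by simp) 0).hasDerivAt
  have h1 : HasDerivAt (fun u : ℝ => 2 * (u - p) + ε * (2 * f u * deriv f u))
      (2 + ε * (2 * (deriv f 0 * deriv f 0 + f 0 * deriv (deriv f) 0))) 0 := by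
    have ha : HasDerivAt (fun u : ℝ => 2 * (u - p)) 2 0 := by
      simpa using ((hasDerivAt_id (0:ℝ)).sub_const p).const_mul 2
    have hb : HasDerivAt (fun u : ℝ => ε * (2 * f u * deriv f u))
        (ε * (2 * (deriv f 0 * deriv f 0 + f 0 * deriv (deriv f) 0))) 0 := by
      have := (((hd.const_mul 2).fun_mul hd').const_mul ε)
      convert this using 1
      · rfl
      · rfl
      ring
    exact ha.add hb
  exact h1.deriv

lemma fderiv_q (ε p x z : ℝ) :
    fderiv ℝ (fun w : ℝ × ℝ => (w.1 - p) ^ 2 + ε * w.2 ^ 2) (x, z)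
      = (2 * (x - p)) • (ContinuousLinearMap.fst ℝ ℝ ℝ)
        + (ε * (2 * z)) • (ContinuousLinearMap.snd ℝ ℝ ℝ) := by
  have h1 : HasFDerivAt (fun w : ℝ × ℝ => (w.1 - p) ^ 2)
      ((2 * (x - p)) • (ContinuousLinearMap.fst ℝ ℝ ℝ)) (x, z) := by
    have hd : HasDerivAt (fun t : ℝ => (t - p) ^ 2) (2 * (x - p)) x := by
      simpa using (((hasDerivAt_id x).sub_const p).fun_pow 2)
    exact hd.comp_hasFDerivAt (f := Prod.fst) (x, z) (hasFDerivAt_fst)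
  have h2 : HasFDerivAt (fun w : ℝ × ℝ => ε * w.2 ^ 2)
      ((ε * (2 * z)) • (ContinuousLinearMap.snd ℝ ℝ ℝ)) (x, z) := by
    have hd : HasDerivAt (fun t : ℝ => ε * t ^ 2) (ε * (2 * z)) z := by
      simpa using ((hasDerivAt_id z).pow 2).const_mul ε
    exact hd.comp_hasFDerivAt (f := Prod.snd) (x, z) (hasFDerivAt_snd)
  exact (h1.add h2).fderiv

/-- In the normal form for a pair of curve germs through `(0, 1)` and
`(0, −1)`, the conic `{(x−p)² + εz² = p² + ε}`, centered at `(p, 0)`, has contact of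
order at least 3 with the graphs of both `f₁` and `f₂` at `u = 0`; the center `(p, 0)`
is the unique critical point of the quadratic function, and the conic is an ellipse
(positive definite quadratic part) if `ε = 1` and a hyperbola (indefinite quadratic
part) if `ε = −1`. -/
theorem conic_contact_order_three (ε p : ℝ) (hε : ε = 1 ∨ ε = -1)
    (f₁ f₂ : ℝ → ℝ) (hf₁ : ContDiff ℝ (⊤ : ℕ∞) f₁) (hf₂ : ContDiff ℝ (⊤ : ℕ∞) f₂)
    (h10 : f₁ 0 = 1) (h11 : deriv f₁ 0 = ε * p)
    (h12 : deriv (deriv f₁) 0 = -(p ^ 2 + ε))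
    (h20 : f₂ 0 = -1) (h21 : deriv f₂ 0 = -(ε * p))
    (h22 : deriv (deriv f₂) 0 = p ^ 2 + ε) :
    let q : ℝ → ℝ → ℝ := fun x z => (x - p) ^ 2 + ε * z ^ 2
    let g₁ : ℝ → ℝ := fun u => q u (f₁ u) - (p ^ 2 + ε)
    let g₂ : ℝ → ℝ := fun u => q u (f₂ u) - (p ^ 2 + ε)
    (g₁ 0 = 0 ∧ deriv g₁ 0 = 0 ∧ deriv (deriv g₁) 0 = 0) ∧
    (g₂ 0 = 0 ∧ deriv g₂ 0 = 0 ∧ deriv (deriv g₂) 0 = 0) ∧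
    (∀ x z : ℝ, fderiv ℝ (fun w : ℝ × ℝ => q w.1 w.2) (x, z) = 0 ↔ (x, z) = (p, 0)) ∧
    (ε = 1 → ∀ w : ℝ × ℝ, w ≠ 0 → 0 < w.1 ^ 2 + ε * w.2 ^ 2) ∧
    (ε = -1 → (∃ w : ℝ × ℝ, 0 < w.1 ^ 2 + ε * w.2 ^ 2) ∧
      (∃ w : ℝ × ℝ, w.1 ^ 2 + ε * w.2 ^ 2 < 0)) := by
  intro q g₁ g₂
  have hε2 : ε * ε = 1 := by rcases hε with h | h <;> rw [h] <;> norm_num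
  have hεne : ε ≠ 0 := by rcases hε with h | h <;> rw [h] <;> norm_num
  have hg₁ : g₁ = fun u => (u - p) ^ 2 + ε * (f₁ u) ^ 2 - (p ^ 2 + ε) := rfl
  have hg₂ : g₂ = fun u => (u - p) ^ 2 + ε * (f₂ u) ^ 2 - (p ^ 2 + ε) := rfl
  refine ⟨⟨?_, ?_, ?_⟩, ⟨?_, ?_, ?_⟩, ?_, ?_, ?_⟩
  · simp only [hg₁, h10]; ring
  · rw [hg₁, deriv_g ε p _ f₁ hf₁]
    simp only [h10, h11]
    rcases hε with h | h <;> rw [h] <;> ring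
  · rw [hg₁, second_deriv_g ε p _ f₁ hf₁, h10, h11, h12]
    rcases hε with h | h <;> rw [h] <;> ring
  · simp only [hg₂, h20]; ring
  · rw [hg₂, deriv_g ε p _ f₂ hf₂]
    simp only [h20, h21]
    rcases hε with h | h <;> rw [h] <;> ring
  · rw [hg₂, second_deriv_g ε p _ f₂ hf₂, h20, h21, h22]
    rcases hε with h | h <;> rw [h] <;> ring
  · intro x z
    have hq : (fun w : ℝ × ℝ => q w.1 w.2)
        = fun w : ℝ × ℝ => (w.1 - p) ^ 2 + ε * w.2 ^ 2 := rfl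
    rw [hq, fderiv_q ε p x z]
    constructor
    · intro h
      have hx := congrArg (fun L : ℝ × ℝ →L[ℝ] ℝ => L (1, 0)) h
      have hz := congrArg (fun L : ℝ × ℝ →L[ℝ] ℝ => L (0, 1)) h
      simp at hx hz
      have hx' : x = p := by linarith
      have hz' : z = 0 := hz.resolve_left hεne
      simp [hx', hz']
    · intro h
      rw [Prod.mk.injEq] at h
      simp [h.1, h.2]
  · intro h1 w hw
    subst h1
    have : w.1 ≠ 0 ∨ w.2 ≠ 0 := by
      by_contra hc
      push_neg at hc
      exact hw (Prod.ext hc.1 hc.2)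
    rcases this with h | h
    · positivity
    · positivity
  · intro h1
    refine ⟨⟨(1, 0), by norm_num⟩, ⟨(0, 1), by rw [h1]; norm_num⟩⟩
end
end

section
/- Let ε = ±1 and p, δ ∈ ℝ, let A, B be symmetric (N−1)×(N−1) real matrices, and suppose f₁(u, v) = 1 + εpu − ½(p² + ε)u² + vᵀAv + R₁(u, v) and f₂(u, v) = −1 − εpu + (δ/2)(p² + ε)u² + vᵀBv + R₂(u, v), where R₁, R₂ are smooth and vanish at the origin together with all their partial derivatives up to order 2. Then at the parameter point q = (0, 0, 0, 0) and for X = (x, y, z) ∈ ℝ × ℝ^{N−1} × ℝ one has: F(q, X) = 2z; ∂F/∂u₁(q, X) = ε(x + pz − p); ∂F/∂v_{1,j}(q, X) = −2(Ay)_j for each j; ∂F/∂u₂(q, X) = (p² − δp² − δε)x + εpz + εp; and ∂F/∂v_{2,j}(q, X) = −2(By)_j for each j. -/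
noncomputable section

/-- Euclidean dot product on `Fin m → ℝ`. -/
def dotP {m : ℕ} (x y : Fin m → ℝ) : ℝ := ∑ i, x i * y i

/-- Graph parameterization `ψ(u,v) = (u, v, f(u,v))`, where the parameter point
`w : Fin (n+1) → ℝ` packs `u = w 0` and `v = (w 1, …, w n)`. -/
def graphMap {n : ℕ} (f : (Fin (n + 1) → ℝ) → ℝ) (w : Fin (n + 1) → ℝ) :
    Fin (n + 2) → ℝ :=
  Fin.snoc w (f w)

/-- Normal vector `N = (−f_u, −f_{v₁}, …, −f_{v_{n}}, 1)` of the graph of `f`. -/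
def normalVec {n : ℕ} (f : (Fin (n + 1) → ℝ) → ℝ) (w : Fin (n + 1) → ℝ) :
    Fin (n + 2) → ℝ :=
  Fin.snoc (fun i => -(fderiv ℝ f w (Pi.single i 1))) 1

/-- First parameter block `(u₁, v₁)` of `q : Fin (2*(n+1)) → ℝ`. -/
def par1 {n : ℕ} (q : Fin (2 * (n + 1)) → ℝ) : Fin (n + 1) → ℝ :=
  fun i => q ⟨i.1, by have := i.2; omega⟩

/-- Second parameter block `(u₂, v₂)` of `q : Fin (2*(n+1)) → ℝ`. -/
def par2 {n : ℕ} (q : Fin (2 * (n + 1)) → ℝ) : Fin (n + 1) → ℝ :=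
  fun i => q ⟨i.1 + (n + 1), by have := i.2; omega⟩

/-- Mid-point `M = (p₁ + p₂)/2`. -/
def midM {n : ℕ} (f₁ f₂ : (Fin (n + 1) → ℝ) → ℝ) (q : Fin (2 * (n + 1)) → ℝ) :
    Fin (n + 2) → ℝ :=
  fun i => (graphMap f₁ (par1 q) i + graphMap f₂ (par2 q) i) / 2

/-- Mid-chord `C = (p₁ − p₂)/2`. -/
def midC {n : ℕ} (f₁ f₂ : (Fin (n + 1) → ℝ) → ℝ) (q : Fin (2 * (n + 1)) → ℝ) :
    Fin (n + 2) → ℝ :=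
  fun i => (graphMap f₁ (par1 q) i - graphMap f₂ (par2 q) i) / 2

/-- The normal vector `n = (N₁·C) N₂ + (N₂·C) N₁` of the mid-hyperplane. -/
def midNormal {n : ℕ} (f₁ f₂ : (Fin (n + 1) → ℝ) → ℝ) (q : Fin (2 * (n + 1)) → ℝ) :
    Fin (n + 2) → ℝ :=
  fun i =>
    dotP (normalVec f₁ (par1 q)) (midC f₁ f₂ q) * normalVec f₂ (par2 q) i +
    dotP (normalVec f₂ (par2 q)) (midC f₁ f₂ q) * normalVec f₁ (par1 q) i

/-- The mid-hyperplane function `F(q, X) = ((N₁·C)N₂ + (N₂·C)N₁)·(X − M)`. -/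
def midF {n : ℕ} (f₁ f₂ : (Fin (n + 1) → ℝ) → ℝ) (q : Fin (2 * (n + 1)) → ℝ)
    (X : Fin (n + 2) → ℝ) : ℝ :=
  dotP (midNormal f₁ f₂ q) (fun i => X i - midM f₁ f₂ q i)

/-- Partial derivative of `F` with respect to the `i`-th parameter
(`u₁, v₁, u₂, v₂` are packed as coordinates of `Fin (2*(n+1))`). -/
def midFd {n : ℕ} (f₁ f₂ : (Fin (n + 1) → ℝ) → ℝ) (i : Fin (2 * (n + 1)))
    (q : Fin (2 * (n + 1)) → ℝ) (X : Fin (n + 2) → ℝ) : ℝ :=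
  fderiv ℝ (fun q' => midF f₁ f₂ q' X) q (Pi.single i 1)

/-- The map `G = (F, F_{u₁}, F_{v₁}, F_{u₂}, F_{v₂})`. -/
def midG {n : ℕ} (f₁ f₂ : (Fin (n + 1) → ℝ) → ℝ)
    (qX : (Fin (2 * (n + 1)) → ℝ) × (Fin (n + 2) → ℝ)) : Fin (2 * (n + 1) + 1) → ℝ :=
  Fin.cons (midF f₁ f₂ qX.1 qX.2) (fun i => midFd f₁ f₂ i qX.1 qX.2)

/-- The `2N × 2N` matrix of second partial derivatives of `F` with respect to the
parameters `(u₁, v₁, u₂, v₂)`. -/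
def midHess {n : ℕ} (f₁ f₂ : (Fin (n + 1) → ℝ) → ℝ) (q : Fin (2 * (n + 1)) → ℝ)
    (X : Fin (n + 2) → ℝ) : Matrix (Fin (2 * (n + 1))) (Fin (2 * (n + 1))) ℝ :=
  Matrix.of fun i j => fderiv ℝ (fun q' => midFd f₁ f₂ j q' X) q (Pi.single i 1)



/-- coordinate projection as CLM -/
def prj {k : ℕ} (i : Fin k) : (Fin k → ℝ) →L[ℝ] ℝ := ContinuousLinearMap.proj i

@[simp] lemma prj_apply {k : ℕ} (i : Fin k) (w : Fin k → ℝ) : prj i w = w i := rfl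

lemma Rval {m : ℕ} {R : (Fin m → ℝ) → ℝ} (h : iteratedFDeriv ℝ 0 R 0 = 0) : R 0 = 0 := by
  have h0 : (iteratedFDeriv ℝ 0 R 0) ![] = R 0 := iteratedFDeriv_zero_apply _
  rw [h] at h0; simpa using h0.symm

lemma Rfderiv {m : ℕ} {R : (Fin m → ℝ) → ℝ} (h : iteratedFDeriv ℝ 1 R 0 = 0) :
    fderiv ℝ R 0 = 0 := by
  ext v
  have h1 : (iteratedFDeriv ℝ 1 R 0) ![v] = fderiv ℝ R 0 v := by
    rw [iteratedFDeriv_one_apply]; simp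
  rw [h] at h1; simpa using h1.symm

lemma Rfderiv2 {m : ℕ} {R : (Fin m → ℝ) → ℝ} (hR : ContDiff ℝ (⊤ : ℕ∞) R)
    (h : iteratedFDeriv ℝ 2 R 0 = 0) (v : Fin m → ℝ) :
    HasFDerivAt (fun w => fderiv ℝ R w v) (0 : (Fin m → ℝ) →L[ℝ] ℝ) 0 := by
  have hd : DifferentiableAt ℝ (fderiv ℝ R) 0 :=
    ((hR.fderiv_right (m := 1) (WithTop.coe_le_coe.mpr le_top)).differentiable one_ne_zero) 0
  have h2 : fderiv ℝ (fderiv ℝ R) 0 = 0 := by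
    ext u w
    have h3 := iteratedFDeriv_two_apply (𝕜 := ℝ) R 0 ![u, w]
    rw [h] at h3; simpa using h3.symm
  have hc : HasFDerivAt (fderiv ℝ R) (0 : (Fin m → ℝ) →L[ℝ] ((Fin m → ℝ) →L[ℝ] ℝ)) 0 :=
    h2 ▸ hd.hasFDerivAt
  have hcomp := ((ContinuousLinearMap.apply ℝ ℝ v).hasFDerivAt (x := fderiv ℝ R 0)).comp
      (0 : Fin m → ℝ) hc
  exact hcomp.congr_fderiv (by ext w; simp)

lemma poly_atoms {n : ℕ} (a b c : ℝ) (M : Matrix (Fin n) (Fin n) ℝ)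
    (f R : (Fin (n + 1) → ℝ) → ℝ) (hR : ContDiff ℝ (⊤ : ℕ∞) R)
    (hR0 : ∀ k : ℕ, k ≤ 2 → iteratedFDeriv ℝ k R 0 = 0)
    (hf : ∀ w, f w = a + b * w 0 + c * (w 0 * w 0) +
      (∑ j : Fin n, ∑ k : Fin n, M j k * w j.succ * w k.succ) + R w) :
    f 0 = a ∧ HasFDerivAt f (b • prj 0) 0 ∧
    (∀ i : Fin (n + 1), HasFDerivAt (fun w => fderiv ℝ f w (Pi.single i 1))
      ((Fin.cons ((2 * c) • prj 0)
        (fun j : Fin n => ∑ k : Fin n, (M j k + M k j) • prj k.succ) :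
        Fin (n + 1) → (Fin (n + 1) → ℝ) →L[ℝ] ℝ) i) 0) := by
  have hfe : f = fun w => a + b * w 0 + c * (w 0 * w 0) +
      (∑ j : Fin n, ∑ k : Fin n, M j k * w j.succ * w k.succ) + R w := funext hf
  have hRdiff : ∀ w, HasFDerivAt R (fderiv ℝ R w) w :=
    fun w => ((hR.differentiable (by simp)) w).hasFDerivAt
  have hRf0 : fderiv ℝ R 0 = 0 := Rfderiv (hR0 1 (by norm_num))
  have key : ∀ w : Fin (n + 1) → ℝ, ∃ D : (Fin (n + 1) → ℝ) →L[ℝ] ℝ,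
      HasFDerivAt f D w ∧ ∀ v, D v = b * v 0 + 2 * c * (w 0 * v 0) +
        (∑ j : Fin n, ∑ k : Fin n, M j k * (v j.succ * w k.succ + w j.succ * v k.succ)) +
        fderiv ℝ R w v := by
    intro w
    rw [hfe]
    refine ⟨_, ((((hasFDerivAt_const a w).add ((hasFDerivAt_apply 0 w).const_mul b)).add
          (((hasFDerivAt_apply 0 w).mul (hasFDerivAt_apply 0 w)).const_mul c)).add
          (HasFDerivAt.fun_sum fun j (_ : j ∈ Finset.univ) => HasFDerivAt.fun_sum fun k (_ : k ∈ Finset.univ) =>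
            ((hasFDerivAt_apply j.succ w).const_mul (M j k)).mul
              (hasFDerivAt_apply k.succ w))).add (hRdiff w), ?_⟩
    intro v
    have hterm : ∀ j k : Fin n,
        (M j k * w j.succ) * v k.succ + w k.succ * (M j k * v j.succ)
        = M j k * (v j.succ * w k.succ + w j.succ * v k.succ) := by intros; ring
    simp only [ContinuousLinearMap.add_apply, ContinuousLinearMap.smul_apply,
      ContinuousLinearMap.zero_apply, ContinuousLinearMap.sum_apply,
      ContinuousLinearMap.proj_apply, smul_eq_mul]
    simp only [← hterm]
    ring
  have hfval : f 0 = a := by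
    rw [hf]; simp [Rval (hR0 0 (by norm_num))]
  have hfd0 : HasFDerivAt f (b • prj 0) 0 := by
    obtain ⟨D, hD, hDv⟩ := key 0
    exact hD.congr_fderiv (by ext v; rw [hDv]; simp [hRf0])
  refine ⟨hfval, hfd0, ?_⟩
  intro i
  induction i using Fin.cases with
  | zero =>
    have heq : (fun w => fderiv ℝ f w (Pi.single (0 : Fin (n+1)) 1)) =
        fun w => b + 2 * c * w 0 + fderiv ℝ R w (Pi.single (0 : Fin (n+1)) 1) := by
      funext w
      obtain ⟨D, hD, hDv⟩ := key w
      rw [hD.fderiv, hDv]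
      simp [Pi.single_apply, Fin.succ_ne_zero]
    rw [heq, Fin.cons_zero]
    exact (((hasFDerivAt_const b 0).add ((hasFDerivAt_apply 0 0).const_mul (2 * c))).add
      (Rfderiv2 hR (hR0 2 le_rfl) _)).congr_fderiv (by ext v; simp)
  | succ j =>
    have heq : (fun w => fderiv ℝ f w (Pi.single j.succ 1)) =
        fun w => (∑ k : Fin n, (M j k + M k j) * w k.succ) +
          fderiv ℝ R w (Pi.single j.succ 1) := by
      funext w
      obtain ⟨D, hD, hDv⟩ := key w
      rw [hD.fderiv, hDv]
      have hv0 : (Pi.single j.succ (1:ℝ) : Fin (n+1) → ℝ) 0 = 0 :=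
        Pi.single_eq_of_ne (Fin.succ_ne_zero j).symm 1
      have hvs : ∀ k : Fin n, (Pi.single j.succ (1:ℝ) : Fin (n+1) → ℝ) k.succ
          = if k = j then 1 else 0 := by
        intro k; simp [Pi.single_apply, Fin.succ_inj]
      simp only [hv0, hvs, mul_zero, zero_mul, add_zero, zero_add, mul_ite, ite_mul,
        mul_one, one_mul]
      congr 1
      simp only [mul_add, Finset.sum_add_distrib, mul_ite, mul_zero, Finset.sum_ite_eq,
        Finset.sum_ite_eq', Finset.mem_univ, if_true, add_mul]
      rw [Finset.sum_comm]
      simp [Finset.sum_ite_eq']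
    rw [heq, Fin.cons_succ]
    exact ((HasFDerivAt.fun_sum fun k (_ : k ∈ Finset.univ) =>
        (hasFDerivAt_apply k.succ (0 : Fin (n+1) → ℝ)).const_mul (M j k + M k j)).add
      (Rfderiv2 hR (hR0 2 le_rfl) _)).congr_fderiv (by ext v; simp)

def emb1 {n : ℕ} (i : Fin (n + 1)) : Fin (2 * (n + 1)) := ⟨i.1, by omega⟩
def emb2 {n : ℕ} (i : Fin (n + 1)) : Fin (2 * (n + 1)) := ⟨i.1 + (n + 1), by omega⟩

def pr1 {n : ℕ} : (Fin (2 * (n + 1)) → ℝ) →L[ℝ] (Fin (n + 1) → ℝ) :=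
  ContinuousLinearMap.pi fun i => ContinuousLinearMap.proj (emb1 i)
def pr2 {n : ℕ} : (Fin (2 * (n + 1)) → ℝ) →L[ℝ] (Fin (n + 1) → ℝ) :=
  ContinuousLinearMap.pi fun i => ContinuousLinearMap.proj (emb2 i)

@[simp] lemma pr1_apply {n : ℕ} (q : Fin (2 * (n + 1)) → ℝ) (i : Fin (n + 1)) :
    pr1 q i = q (emb1 i) := rfl
@[simp] lemma pr2_apply {n : ℕ} (q : Fin (2 * (n + 1)) → ℝ) (i : Fin (n + 1)) :
    pr2 q i = q (emb2 i) := rfl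

/-- Values of `F` and of its first partial derivatives at the base
parameter point `q = 0` for a pair of hypersurfaces in normal form. The coordinates of
`X` are `x = X 0`, `y = (X 1, …, X n)` and `z = X (n+1)`, i.e. `X = Fin.cons x (Fin.snoc y z)`. -/
theorem midF_partials_normal_form {n : ℕ} (hn : 1 ≤ n) (ε p δ : ℝ)
    (hε : ε = 1 ∨ ε = -1)
    (A B : Matrix (Fin n) (Fin n) ℝ) (hA : A.IsSymm) (hB : B.IsSymm)
    (f₁ f₂ R₁ R₂ : (Fin (n + 1) → ℝ) → ℝ)
    (hR₁ : ContDiff ℝ (⊤ : ℕ∞) R₁) (hR₂ : ContDiff ℝ (⊤ : ℕ∞) R₂)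
    (hR₁0 : ∀ k : ℕ, k ≤ 2 → iteratedFDeriv ℝ k R₁ 0 = 0)
    (hR₂0 : ∀ k : ℕ, k ≤ 2 → iteratedFDeriv ℝ k R₂ 0 = 0)
    (hf₁ : ∀ w : Fin (n + 1) → ℝ, f₁ w =
      1 + ε * p * w 0 - (p ^ 2 + ε) / 2 * (w 0) ^ 2 +
        (∑ j : Fin n, ∑ k : Fin n, A j k * w j.succ * w k.succ) + R₁ w)
    (hf₂ : ∀ w : Fin (n + 1) → ℝ, f₂ w =
      -1 - ε * p * w 0 + δ / 2 * (p ^ 2 + ε) * (w 0) ^ 2 +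
        (∑ j : Fin n, ∑ k : Fin n, B j k * w j.succ * w k.succ) + R₂ w)
    (x z : ℝ) (y : Fin n → ℝ) :
    let X : Fin (n + 2) → ℝ := Fin.cons x (Fin.snoc y z)
    midF f₁ f₂ 0 X = 2 * z ∧
    midFd f₁ f₂ ⟨0, by omega⟩ 0 X = ε * (x + p * z - p) ∧
    (∀ j : Fin n, midFd f₁ f₂ ⟨j.1 + 1, by have := j.2; omega⟩ 0 X =
      -2 * ∑ k : Fin n, A j k * y k) ∧
    midFd f₁ f₂ ⟨n + 1, by omega⟩ 0 X =
      (p ^ 2 - δ * p ^ 2 - δ * ε) * x + ε * p * z + ε * p ∧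
    (∀ j : Fin n, midFd f₁ f₂ ⟨n + 2 + j.1, by have := j.2; omega⟩ 0 X =
      -2 * ∑ k : Fin n, B j k * y k) := by
  intro X
  have hXdef : X = Fin.cons x (Fin.snoc y z) := rfl
  have hε2 : ε * ε = 1 := by rcases hε with rfl | rfl <;> norm_num
  have hXlast : X (Fin.last (n + 1)) = z := by
    rw [hXdef, ← Fin.succ_last, Fin.cons_succ, Fin.snoc_last]
  have hX0 : X (Fin.castSucc 0) = x := by rw [hXdef]; simp
  have hXs : ∀ j : Fin n, X (Fin.castSucc j.succ) = y j := by
    intro j; rw [hXdef, ← Fin.succ_castSucc, Fin.cons_succ, Fin.snoc_castSucc]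
  have hX0' : X 0 = x := by rw [hXdef]; simp
  obtain ⟨hf10, hf1d, hf1H⟩ := poly_atoms 1 (ε * p) (-((p ^ 2 + ε) / 2)) A f₁ R₁ hR₁ hR₁0
    (fun w => by rw [hf₁ w]; ring)
  obtain ⟨hf20, hf2d, hf2H⟩ := poly_atoms (-1) (-(ε * p)) (δ * (p ^ 2 + ε) / 2) B f₂ R₂ hR₂ hR₂0
    (fun w => by rw [hf₂ w]; ring)
  have hf1de : fderiv ℝ f₁ 0 = (ε * p) • prj 0 := hf1d.fderiv
  have hf2de : fderiv ℝ f₂ 0 = (-(ε * p)) • prj 0 := hf2d.fderiv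
  have hp10 : par1 (0 : Fin (2 * (n + 1)) → ℝ) = 0 := rfl
  have hp20 : par2 (0 : Fin (2 * (n + 1)) → ℝ) = 0 := rfl
  have hsing0 : ∀ j : Fin n, (Pi.single j.succ (1:ℝ) : Fin (n+1) → ℝ) 0 = 0 :=
    fun j => Pi.single_eq_of_ne (Fin.succ_ne_zero j).symm 1
  have hAs : ∀ j k : Fin n, A j k + A k j = 2 * A j k := fun j k => by rw [hA.apply j k]; ring
  have hBs : ∀ j k : Fin n, B j k + B k j = 2 * B j k := fun j k => by rw [hB.apply j k]; ring
  have lift1 : ∀ {h : (Fin (n + 1) → ℝ) → ℝ} {L : (Fin (n+1) → ℝ) →L[ℝ] ℝ},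
      HasFDerivAt h L 0 →
      HasFDerivAt (fun q => h (par1 q)) (L.comp pr1) (0 : Fin (2 * (n + 1)) → ℝ) := by
    intro h L hh
    have hh' : HasFDerivAt h L (pr1 (0 : Fin (2 * (n + 1)) → ℝ)) := by
      rw [map_zero]; exact hh
    exact hh'.comp 0 pr1.hasFDerivAt
  have lift2 : ∀ {h : (Fin (n + 1) → ℝ) → ℝ} {L : (Fin (n+1) → ℝ) →L[ℝ] ℝ},
      HasFDerivAt h L 0 →
      HasFDerivAt (fun q => h (par2 q)) (L.comp pr2) (0 : Fin (2 * (n + 1)) → ℝ) := by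
    intro h L hh
    have hh' : HasFDerivAt h L (pr2 (0 : Fin (2 * (n + 1)) → ℝ)) := by
      rw [map_zero]; exact hh
    exact hh'.comp 0 pr2.hasFDerivAt
  have hg1 := lift1 hf1d
  have hg2 := lift2 hf2d
  have hα := fun i => lift1 (hf1H i)
  have hβ := fun i => lift2 (hf2H i)
  haveI : NeZero n := ⟨by omega⟩
  -- pointwise expansions
  have hS₁e : ∀ q : Fin (2*(n+1)) → ℝ, dotP (normalVec f₁ (par1 q)) (midC f₁ f₂ q) =
      (∑ i : Fin (n+1),
        -(fderiv ℝ f₁ (par1 q) (Pi.single i 1)) * ((par1 q i - par2 q i) * (2:ℝ)⁻¹))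
      + (f₁ (par1 q) - f₂ (par2 q)) * (2:ℝ)⁻¹ := by
    intro q
    simp [dotP, normalVec, midC, graphMap, Fin.sum_univ_castSucc, div_eq_mul_inv]
  have hS₂e : ∀ q : Fin (2*(n+1)) → ℝ, dotP (normalVec f₂ (par2 q)) (midC f₁ f₂ q) =
      (∑ i : Fin (n+1),
        -(fderiv ℝ f₂ (par2 q) (Pi.single i 1)) * ((par1 q i - par2 q i) * (2:ℝ)⁻¹))
      + (f₁ (par1 q) - f₂ (par2 q)) * (2:ℝ)⁻¹ := by
    intro q
    simp [dotP, normalVec, midC, graphMap, Fin.sum_univ_castSucc, div_eq_mul_inv]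
  have hT₁e : ∀ q : Fin (2*(n+1)) → ℝ,
      dotP (normalVec f₁ (par1 q)) (fun i => X i - midM f₁ f₂ q i) =
      (∑ i : Fin (n+1),
        -(fderiv ℝ f₁ (par1 q) (Pi.single i 1)) *
          (X i.castSucc - (par1 q i + par2 q i) * (2:ℝ)⁻¹))
      + (X (Fin.last (n+1)) - (f₁ (par1 q) + f₂ (par2 q)) * (2:ℝ)⁻¹) := by
    intro q
    simp [dotP, normalVec, midM, graphMap, Fin.sum_univ_castSucc, div_eq_mul_inv]
  have hT₂e : ∀ q : Fin (2*(n+1)) → ℝ,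
      dotP (normalVec f₂ (par2 q)) (fun i => X i - midM f₁ f₂ q i) =
      (∑ i : Fin (n+1),
        -(fderiv ℝ f₂ (par2 q) (Pi.single i 1)) *
          (X i.castSucc - (par1 q i + par2 q i) * (2:ℝ)⁻¹))
      + (X (Fin.last (n+1)) - (f₁ (par1 q) + f₂ (par2 q)) * (2:ℝ)⁻¹) := by
    intro q
    simp [dotP, normalVec, midM, graphMap, Fin.sum_univ_castSucc, div_eq_mul_inv]
  -- values at 0
  have hS₁0 : dotP (normalVec f₁ (par1 (0 : Fin (2*(n+1)) → ℝ))) (midC f₁ f₂ 0) = 1 := by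
    rw [hS₁e 0]
    simp [hp10, hp20, hf10, hf20]
    norm_num
  have hS₂0 : dotP (normalVec f₂ (par2 (0 : Fin (2*(n+1)) → ℝ))) (midC f₁ f₂ 0) = 1 := by
    rw [hS₂e 0]
    simp [hp10, hp20, hf10, hf20]
    norm_num
  have hT₁0 : dotP (normalVec f₁ (par1 (0 : Fin (2*(n+1)) → ℝ)))
      (fun i => X i - midM f₁ f₂ 0 i) = -(ε*p)*x + z := by
    rw [hT₁e 0, Fin.sum_univ_succ]
    simp [hp10, hp20, hf10, hf20, hf1de, Pi.single_eq_same, hsing0, hX0, hX0', hXlast]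
  have hT₂0 : dotP (normalVec f₂ (par2 (0 : Fin (2*(n+1)) → ℝ)))
      (fun i => X i - midM f₁ f₂ 0 i) = ε*p*x + z := by
    rw [hT₂e 0, Fin.sum_univ_succ]
    simp [hp10, hp20, hf10, hf20, hf2de, Pi.single_eq_same, hsing0, hX0, hX0', hXlast]
  -- derivatives of the four scalar functions
  obtain ⟨LS₁, hLS₁, hLS₁v⟩ : ∃ L : (Fin (2*(n+1)) → ℝ) →L[ℝ] ℝ,
      HasFDerivAt (fun q => dotP (normalVec f₁ (par1 q)) (midC f₁ f₂ q)) L 0 ∧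
      ∀ v, L v = ε * p * v (emb2 0) := by
    rw [show (fun q : Fin (2*(n+1)) → ℝ => dotP (normalVec f₁ (par1 q)) (midC f₁ f₂ q))
      = _ from funext hS₁e]
    refine ⟨_, (HasFDerivAt.fun_sum fun i (_ : i ∈ Finset.univ) =>
        ((hα i).fun_neg.fun_mul (((hasFDerivAt_apply (emb1 i) 0).fun_sub
          (hasFDerivAt_apply (emb2 i) 0)).mul_const _))).fun_add
        ((hg1.sub hg2).mul_const _), ?_⟩
    intro v
    simp only [ContinuousLinearMap.add_apply, ContinuousLinearMap.sum_apply,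
      ContinuousLinearMap.smul_apply, ContinuousLinearMap.comp_apply,
      ContinuousLinearMap.neg_apply, ContinuousLinearMap.sub_apply,
      ContinuousLinearMap.proj_apply, smul_eq_mul, pr1_apply, pr2_apply, prj_apply,
      hp10, hp20, hf1de, hf2de, Pi.zero_apply, Fin.sum_univ_succ, Pi.single_eq_same,
      hsing0, Fin.cons_zero, Fin.cons_succ, sub_zero, zero_sub, mul_zero, zero_mul,
      mul_one, neg_zero, add_zero, zero_add, neg_neg, Finset.sum_const_zero]
    ring
  obtain ⟨LS₂, hLS₂, hLS₂v⟩ : ∃ L : (Fin (2*(n+1)) → ℝ) →L[ℝ] ℝ,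
      HasFDerivAt (fun q => dotP (normalVec f₂ (par2 q)) (midC f₁ f₂ q)) L 0 ∧
      ∀ v, L v = ε * p * v (emb1 0) := by
    rw [show (fun q : Fin (2*(n+1)) → ℝ => dotP (normalVec f₂ (par2 q)) (midC f₁ f₂ q))
      = _ from funext hS₂e]
    refine ⟨_, (HasFDerivAt.fun_sum fun i (_ : i ∈ Finset.univ) =>
        ((hβ i).fun_neg.fun_mul (((hasFDerivAt_apply (emb1 i) 0).fun_sub
          (hasFDerivAt_apply (emb2 i) 0)).mul_const _))).fun_add
        ((hg1.sub hg2).mul_const _), ?_⟩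
    intro v
    simp only [ContinuousLinearMap.add_apply, ContinuousLinearMap.sum_apply,
      ContinuousLinearMap.smul_apply, ContinuousLinearMap.comp_apply,
      ContinuousLinearMap.neg_apply, ContinuousLinearMap.sub_apply,
      ContinuousLinearMap.proj_apply, smul_eq_mul, pr1_apply, pr2_apply, prj_apply,
      hp10, hp20, hf1de, hf2de, Pi.zero_apply, Fin.sum_univ_succ, Pi.single_eq_same,
      hsing0, Fin.cons_zero, Fin.cons_succ, sub_zero, zero_sub, mul_zero, zero_mul,
      mul_one, neg_zero, add_zero, zero_add, neg_neg, Finset.sum_const_zero]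
    ring
  obtain ⟨LT₁, hLT₁, hLT₁v⟩ : ∃ L : (Fin (2*(n+1)) → ℝ) →L[ℝ] ℝ,
      HasFDerivAt (fun q => dotP (normalVec f₁ (par1 q)) (fun i => X i - midM f₁ f₂ q i)) L 0 ∧
      ∀ v, L v = (p^2 + ε) * x * v (emb1 0) + ε * p * v (emb2 0)
        - 2 * ∑ k : Fin n, (∑ j : Fin n, A j k * y j) * v (emb1 k.succ) := by
    rw [show (fun q : Fin (2*(n+1)) → ℝ =>
        dotP (normalVec f₁ (par1 q)) (fun i => X i - midM f₁ f₂ q i)) = _ from funext hT₁e]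
    refine ⟨_, (HasFDerivAt.fun_sum fun i (_ : i ∈ Finset.univ) =>
        ((hα i).fun_neg.fun_mul ((hasFDerivAt_const (X i.castSucc) 0).fun_sub
          (((hasFDerivAt_apply (emb1 i) 0).fun_add
            (hasFDerivAt_apply (emb2 i) 0)).mul_const _)))).fun_add
        ((hasFDerivAt_const (X (Fin.last (n+1))) 0).fun_sub ((hg1.add hg2).mul_const _)), ?_⟩
    intro v
    simp only [ContinuousLinearMap.add_apply, ContinuousLinearMap.sum_apply,
      ContinuousLinearMap.smul_apply, ContinuousLinearMap.comp_apply,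
      ContinuousLinearMap.neg_apply, ContinuousLinearMap.sub_apply,
      ContinuousLinearMap.proj_apply, ContinuousLinearMap.zero_apply, smul_eq_mul,
      pr1_apply, pr2_apply, prj_apply,
      hp10, hp20, hf1de, hf2de, Pi.zero_apply, Fin.sum_univ_succ, Pi.single_eq_same,
      hsing0, Fin.cons_zero, Fin.cons_succ, sub_zero, zero_sub, mul_zero, zero_mul,
      mul_one, neg_zero, add_zero, zero_add, neg_neg, Finset.sum_const_zero,
      hX0, hXs, hXlast, hAs]
    have hsw : (∑ j : Fin n, y j * -(∑ k : Fin n, 2 * A j k * v (emb1 k.succ)))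
        = -(2 * ∑ k : Fin n, (∑ j : Fin n, A j k * y j) * v (emb1 k.succ)) := by
      have h1 : ∀ j : Fin n, y j * -(∑ k : Fin n, 2 * A j k * v (emb1 k.succ))
          = ∑ k : Fin n, -(2 * (A j k * y j * v (emb1 k.succ))) := by
        intro j
        rw [mul_neg, Finset.mul_sum, ← Finset.sum_neg_distrib]
        exact Finset.sum_congr rfl fun k _ => by ring
      have h2 : ∀ k : Fin n, (∑ j : Fin n, A j k * y j) * v (emb1 k.succ)
          = ∑ j : Fin n, A j k * y j * v (emb1 k.succ) := fun k => Finset.sum_mul _ _ _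
      simp only [h1, h2, Finset.mul_sum, ← Finset.sum_neg_distrib]
      rw [Finset.sum_comm]
      exact Finset.sum_congr rfl fun a _ => Finset.sum_congr rfl fun b _ => by ring
    rw [hsw]
    ring
  obtain ⟨LT₂, hLT₂, hLT₂v⟩ : ∃ L : (Fin (2*(n+1)) → ℝ) →L[ℝ] ℝ,
      HasFDerivAt (fun q => dotP (normalVec f₂ (par2 q)) (fun i => X i - midM f₁ f₂ q i)) L 0 ∧
      ∀ v, L v = -(δ * (p^2 + ε)) * x * v (emb2 0) - ε * p * v (emb1 0)
        - 2 * ∑ k : Fin n, (∑ j : Fin n, B j k * y j) * v (emb2 k.succ) := by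
    rw [show (fun q : Fin (2*(n+1)) → ℝ =>
        dotP (normalVec f₂ (par2 q)) (fun i => X i - midM f₁ f₂ q i)) = _ from funext hT₂e]
    refine ⟨_, (HasFDerivAt.fun_sum fun i (_ : i ∈ Finset.univ) =>
        ((hβ i).fun_neg.fun_mul ((hasFDerivAt_const (X i.castSucc) 0).fun_sub
          (((hasFDerivAt_apply (emb1 i) 0).fun_add
            (hasFDerivAt_apply (emb2 i) 0)).mul_const _)))).fun_add
        ((hasFDerivAt_const (X (Fin.last (n+1))) 0).fun_sub ((hg1.add hg2).mul_const _)), ?_⟩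
    intro v
    simp only [ContinuousLinearMap.add_apply, ContinuousLinearMap.sum_apply,
      ContinuousLinearMap.smul_apply, ContinuousLinearMap.comp_apply,
      ContinuousLinearMap.neg_apply, ContinuousLinearMap.sub_apply,
      ContinuousLinearMap.proj_apply, ContinuousLinearMap.zero_apply, smul_eq_mul,
      pr1_apply, pr2_apply, prj_apply,
      hp10, hp20, hf1de, hf2de, Pi.zero_apply, Fin.sum_univ_succ, Pi.single_eq_same,
      hsing0, Fin.cons_zero, Fin.cons_succ, sub_zero, zero_sub, mul_zero, zero_mul,
      mul_one, neg_zero, add_zero, zero_add, neg_neg, Finset.sum_const_zero,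
      hX0, hXs, hXlast, hBs]
    have hsw : (∑ j : Fin n, y j * -(∑ k : Fin n, 2 * B j k * v (emb2 k.succ)))
        = -(2 * ∑ k : Fin n, (∑ j : Fin n, B j k * y j) * v (emb2 k.succ)) := by
      have h1 : ∀ j : Fin n, y j * -(∑ k : Fin n, 2 * B j k * v (emb2 k.succ))
          = ∑ k : Fin n, -(2 * (B j k * y j * v (emb2 k.succ))) := by
        intro j
        rw [mul_neg, Finset.mul_sum, ← Finset.sum_neg_distrib]
        exact Finset.sum_congr rfl fun k _ => by ring
      have h2 : ∀ k : Fin n, (∑ j : Fin n, B j k * y j) * v (emb2 k.succ)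
          = ∑ j : Fin n, B j k * y j * v (emb2 k.succ) := fun k => Finset.sum_mul _ _ _
      simp only [h1, h2, Finset.mul_sum, ← Finset.sum_neg_distrib]
      rw [Finset.sum_comm]
      exact Finset.sum_congr rfl fun a _ => Finset.sum_congr rfl fun b _ => by ring
    rw [hsw]
    ring
  -- split of midF
  have hsplit : (fun q : Fin (2*(n+1)) → ℝ => midF f₁ f₂ q X) = fun q =>
      dotP (normalVec f₁ (par1 q)) (midC f₁ f₂ q) *
        dotP (normalVec f₂ (par2 q)) (fun i => X i - midM f₁ f₂ q i)
      + dotP (normalVec f₂ (par2 q)) (midC f₁ f₂ q) *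
        dotP (normalVec f₁ (par1 q)) (fun i => X i - midM f₁ f₂ q i) := by
    funext q
    simp only [midF, midNormal, dotP, add_mul, mul_assoc, Finset.sum_add_distrib,
      ← Finset.mul_sum]
  obtain ⟨L, hL, hLv⟩ : ∃ L : (Fin (2*(n+1)) → ℝ) →L[ℝ] ℝ,
      HasFDerivAt (fun q => midF f₁ f₂ q X) L 0 ∧
      ∀ v, L v = ε * (x + p * z - p) * v (emb1 0)
        + ((p^2 - δ*p^2 - δ*ε) * x + ε*p*z + ε*p) * v (emb2 0)
        - 2 * (∑ k : Fin n, (∑ j : Fin n, A j k * y j) * v (emb1 k.succ))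
        - 2 * (∑ k : Fin n, (∑ j : Fin n, B j k * y j) * v (emb2 k.succ)) := by
    rw [hsplit]
    refine ⟨_, (hLS₁.mul hLT₂).add (hLS₂.mul hLT₁), ?_⟩
    intro v
    simp only [ContinuousLinearMap.add_apply, ContinuousLinearMap.smul_apply, smul_eq_mul,
      hLS₁v, hLS₂v, hLT₁v, hLT₂v, hS₁0, hS₂0, hT₁0, hT₂0]
    linear_combination (p^2*x*(v (emb2 0)) - p^2*x*(v (emb1 0))) * hε2
  have hfd : fderiv ℝ (fun q => midF f₁ f₂ q X) 0 = L := hL.fderiv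
  have hval1 : ∀ i : Fin (n+1), (emb1 i).1 = i.1 := fun i => rfl
  have hval2 : ∀ i : Fin (n+1), (emb2 i).1 = i.1 + (n+1) := fun i => rfl
  have hsingle : ∀ (a b : Fin (2*(n+1))), a.1 = b.1 →
      (Pi.single a (1:ℝ) : Fin (2*(n+1)) → ℝ) b = 1 := by
    intro a b hab
    cases Fin.eq_of_val_eq hab
    simp
  have hsingle0 : ∀ (a b : Fin (2*(n+1))), a.1 ≠ b.1 →
      (Pi.single a (1:ℝ) : Fin (2*(n+1)) → ℝ) b = 0 := by
    intro a b hab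
    exact Pi.single_eq_of_ne (fun h => hab (by rw [h])) 1
  refine ⟨?_, ?_, ?_, ?_, ?_⟩
  · have h0 := congrFun hsplit 0
    simp only [hS₁0, hS₂0, hT₁0, hT₂0] at h0
    rw [h0]; ring
  · simp only [midFd]
    rw [hfd, hLv]
    rw [hsingle _ _ (by first | (simp [hval1, hval2, Fin.val_succ]; omega) | simp [hval1, hval2, Fin.val_succ]),
      hsingle0 _ _ (by first | (simp [hval1, hval2, Fin.val_succ]; omega) | simp [hval1, hval2, Fin.val_succ])]
    rw [Finset.sum_eq_zero (fun k (_ : k ∈ Finset.univ) => by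
      rw [hsingle0 _ _ (by first | (simp [hval1, hval2, Fin.val_succ]; omega) | simp [hval1, hval2, Fin.val_succ]), mul_zero])]
    rw [Finset.sum_eq_zero (fun k (_ : k ∈ Finset.univ) => by
      rw [hsingle0 _ _ (by first | (simp [hval1, hval2, Fin.val_succ]; omega) | simp [hval1, hval2, Fin.val_succ]), mul_zero])]
    ring
  · intro j
    simp only [midFd]
    rw [hfd, hLv]
    rw [hsingle0 _ _ (by first | (simp [hval1, hval2, Fin.val_succ]; omega) | simp [hval1, hval2, Fin.val_succ]),
      hsingle0 _ _ (by have hj := j.2; first | (simp [hval1, hval2, Fin.val_succ]; omega) | simp [hval1, hval2, Fin.val_succ])]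
    have hsum : (∑ k : Fin n, (∑ j' : Fin n, A j' k * y j') *
        (Pi.single (⟨(j:ℕ) + 1, by have := j.2; omega⟩ : Fin (2*(n+1))) (1:ℝ) :
          Fin (2*(n+1)) → ℝ) (emb1 k.succ))
        = ∑ j' : Fin n, A j' j * y j' := by
      refine (Finset.sum_eq_single_of_mem j (Finset.mem_univ j) ?_).trans ?_
      · intro k _ hk
        rw [hsingle0 _ _ (by have h1 := Fin.val_ne_of_ne hk; simp [hval1, Fin.val_succ]; omega), mul_zero]
      · rw [hsingle _ _ (by simp [hval1, Fin.val_succ]), mul_one]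
    have hzB : (∑ k : Fin n, (∑ j' : Fin n, B j' k * y j') *
        (Pi.single (⟨(j:ℕ) + 1, by have := j.2; omega⟩ : Fin (2*(n+1))) (1:ℝ) :
          Fin (2*(n+1)) → ℝ) (emb2 k.succ)) = 0 :=
      Finset.sum_eq_zero fun k _ => by
        rw [hsingle0 _ _ (by have hj := j.2; have hk := k.2; simp [hval2, Fin.val_succ]; omega), mul_zero]
    rw [hsum, hzB]
    rw [show (∑ j' : Fin n, A j' j * y j') = ∑ k : Fin n, A j k * y k from
      Finset.sum_congr rfl fun k _ => by rw [hA.apply j k]]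
    ring
  · simp only [midFd]
    rw [hfd, hLv]
    rw [hsingle0 _ _ (by first | (simp [hval1, hval2, Fin.val_succ]; omega) | simp [hval1, hval2, Fin.val_succ]),
      hsingle _ _ (by first | (simp [hval1, hval2, Fin.val_succ]; omega) | simp [hval1, hval2, Fin.val_succ])]
    rw [Finset.sum_eq_zero (fun k (_ : k ∈ Finset.univ) => by
      rw [hsingle0 _ _ (by have hk := k.2; first | (simp [hval1, hval2, Fin.val_succ]; omega) | simp [hval1, hval2, Fin.val_succ]), mul_zero])]
    rw [Finset.sum_eq_zero (fun k (_ : k ∈ Finset.univ) => by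
      rw [hsingle0 _ _ (by have hk := k.2; first | (simp [hval1, hval2, Fin.val_succ]; omega) | simp [hval1, hval2, Fin.val_succ]), mul_zero])]
    ring
  · intro j
    simp only [midFd]
    rw [hfd, hLv]
    rw [hsingle0 _ _ (by have hj := j.2; first | (simp [hval1, hval2, Fin.val_succ]; omega) | simp [hval1, hval2, Fin.val_succ]),
      hsingle0 _ _ (by have hj := j.2; first | (simp [hval1, hval2, Fin.val_succ]; omega) | simp [hval1, hval2, Fin.val_succ])]
    have hzA : (∑ k : Fin n, (∑ j' : Fin n, A j' k * y j') *
        (Pi.single (⟨n + 2 + (j:ℕ), by have := j.2; omega⟩ : Fin (2*(n+1))) (1:ℝ) :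
          Fin (2*(n+1)) → ℝ) (emb1 k.succ)) = 0 :=
      Finset.sum_eq_zero fun k _ => by
        rw [hsingle0 _ _ (by have hj := j.2; have hk := k.2; simp [hval1, Fin.val_succ]; omega), mul_zero]
    rw [hzA]
    have hsum : (∑ k : Fin n, (∑ j' : Fin n, B j' k * y j') *
        (Pi.single (⟨n + 2 + (j:ℕ), by have := j.2; omega⟩ : Fin (2*(n+1))) (1:ℝ) :
          Fin (2*(n+1)) → ℝ) (emb2 k.succ))
        = ∑ j' : Fin n, B j' j * y j' := by
      refine (Finset.sum_eq_single_of_mem j (Finset.mem_univ j) ?_).trans ?_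
      · intro k _ hk
        rw [hsingle0 _ _ (by have h1 := Fin.val_ne_of_ne hk; simp [hval2, Fin.val_succ]; omega), mul_zero]
      · rw [hsingle _ _ (by simp [hval2, Fin.val_succ]; omega), mul_one]
    rw [hsum]
    rw [show (∑ j' : Fin n, B j' j * y j') = ∑ k : Fin n, B j k * y k from
      Finset.sum_congr rfl fun k _ => by rw [hB.apply j k]]
    ring
end
end

section
/- Let ε ∈ {1, −1}, let p ∈ ℝ with p ≠ 0 and p² + ε ≠ 0, let δ ∈ ℝ, and let A, B be symmetric (N−1)×(N−1) real matrices. Consider the system of equations in (x, y, z) ∈ ℝ × ℝ^{N−1} × ℝ: 2z = 0, ε(x + pz − p) = 0, Ay = 0, (p² − δp² − δε)x + εpz + εp = 0, By = 0. Then this system admits a solution if and only if δ = 1. Moreover, if δ = 1 and at least one of A, B is invertible, the unique solution is (x, y, z) = (p, 0, 0). -/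
noncomputable section

/-- The system `F = F_{u₁} = F_{v₁} = F_{u₂} = F_{v₂} = 0` at the base
points of a pair of hypersurfaces in normal form, namely
`2z = 0`, `ε(x + pz − p) = 0`, `Ay = 0`, `(p² − δp² − δε)x + εpz + εp = 0`, `By = 0`,
admits a solution iff `δ = 1`; and when `δ = 1` with `A` or `B` invertible the unique
solution is `(x, y, z) = (p, 0, 0)`. Here `m = N − 1`. -/
theorem midplane_system_solution {m : ℕ} (ε p δ : ℝ) (hε : ε = 1 ∨ ε = -1)
    (hp : p ≠ 0) (hpε : p ^ 2 + ε ≠ 0)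
    (A B : Matrix (Fin m) (Fin m) ℝ) (hA : A.IsSymm) (hB : B.IsSymm) :
    ((∃ (x z : ℝ) (y : Fin m → ℝ),
        2 * z = 0 ∧
        ε * (x + p * z - p) = 0 ∧
        A.mulVec y = 0 ∧
        (p ^ 2 - δ * p ^ 2 - δ * ε) * x + ε * p * z + ε * p = 0 ∧
        B.mulVec y = 0) ↔ δ = 1) ∧
    (δ = 1 → (IsUnit A ∨ IsUnit B) →
      ∀ (x z : ℝ) (y : Fin m → ℝ),
        (2 * z = 0 ∧
         ε * (x + p * z - p) = 0 ∧
         A.mulVec y = 0 ∧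
         (p ^ 2 - δ * p ^ 2 - δ * ε) * x + ε * p * z + ε * p = 0 ∧
         B.mulVec y = 0) →
        x = p ∧ y = 0 ∧ z = 0) := by
  have hε0 : ε ≠ 0 := by rcases hε with h | h <;> rw [h] <;> norm_num
  have solve : ∀ x z : ℝ, 2 * z = 0 → ε * (x + p * z - p) = 0 → z = 0 ∧ x = p := by
    intro x z h1 h2
    have hz : z = 0 := by linarith
    refine ⟨hz, ?_⟩
    rcases mul_eq_zero.mp h2 with h | h
    · exact absurd h hε0
    · rw [hz] at h; nlinarith
  constructor
  · constructor
    · rintro ⟨x, z, y, h1, h2, h3, h4, h5⟩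
      obtain ⟨hz, hx⟩ := solve x z h1 h2
      rw [hz, hx] at h4
      have key : p * ((1 - δ) * (p ^ 2 + ε)) = 0 := by nlinarith [h4]
      rcases mul_eq_zero.mp key with h | h
      · exact absurd h hp
      rcases mul_eq_zero.mp h with h | h
      · linarith
      · exact absurd h hpε
    · intro hδ
      exact ⟨p, 0, 0, by ring, by ring, by simp, by rw [hδ]; ring, by simp⟩
  · rintro hδ hAB x z y ⟨h1, h2, h3, h4, h5⟩
    obtain ⟨hz, hx⟩ := solve x z h1 h2
    have hy : y = 0 := by
      rcases hAB with hU | hU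
      · have hinj := Matrix.mulVec_injective_iff_isUnit.mpr hU
        have : A.mulVec y = A.mulVec 0 := by rw [h3, Matrix.mulVec_zero]
        exact hinj this
      · have hinj := Matrix.mulVec_injective_iff_isUnit.mpr hU
        have : B.mulVec y = B.mulVec 0 := by rw [h5, Matrix.mulVec_zero]
        exact hinj this
    exact ⟨hx, hy, hz⟩
end
end

section
/- Let f : I → ℝ be a smooth function on an interval I and λ ∈ ℝ, and define φ₁(t, θ) = (t cos θ, t sin θ, f(t)) and φ₂(t, θ) = ((t − λf(t)) cos θ, (t − λf(t)) sin θ, −f(t)). Fix (t, θ) with t ≠ 0, t − λf(t) ≠ 0, f'(t) ≠ 0, and λf'(t) ≠ 2. Then the two tangent planes span{∂φ₁/∂t, ∂φ₁/∂θ} and span{∂φ₂/∂t, ∂φ₂/∂θ} (at the respective points φ₁(t, θ) and φ₂(t, θ)) are each 2-dimensional, they are distinct, and their intersection is exactly the line ℝ·(sin θ, −cos θ, 0). -/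
noncomputable section

open Real Submodule

lemma hasDerivAt_vec3 {g₀ g₁ g₂ : ℝ → ℝ} {a₀ a₁ a₂ x : ℝ}
    (h₀ : HasDerivAt g₀ a₀ x) (h₁ : HasDerivAt g₁ a₁ x) (h₂ : HasDerivAt g₂ a₂ x) :
    HasDerivAt (fun s => (![g₀ s, g₁ s, g₂ s] : Fin 3 → ℝ)) ![a₀, a₁, a₂] x := by
  rw [hasDerivAt_pi]
  intro i
  fin_cases i <;> simpa

lemma pair_indep (θ p q r : ℝ) (hq : q ≠ 0) (hr : r ≠ 0) :
    LinearIndependent ℝ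
      ![(![p * Real.cos θ, p * Real.sin θ, q] : Fin 3 → ℝ),
        ![-(r * Real.sin θ), r * Real.cos θ, 0]] := by
  rw [LinearIndependent.pair_iff]
  intro a b hab
  have h0 := congrFun hab 0
  have h1 := congrFun hab 1
  have h2 := congrFun hab 2
  simp [Matrix.cons_val_zero, Matrix.cons_val_one] at h0 h1 h2
  have ha : a = 0 := by
    rcases h2 with h | h
    · exact h
    · exact absurd h hq
  subst ha
  simp only [zero_mul, zero_add] at h0 h1
  have hbr : b * r = 0 := by
    linear_combination (-Real.sin θ) * h0 + Real.cos θ * h1 - (b * r) * Real.sin_sq_add_cos_sq θ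
  have hb : b = 0 := by
    rcases mul_eq_zero.1 hbr with h | h
    · exact h
    · exact absurd h hr
  exact ⟨rfl, hb⟩

lemma finrank_span_pair {a b : Fin 3 → ℝ} (h : LinearIndependent ℝ ![a, b]) :
    Module.finrank ℝ (span ℝ ({a, b} : Set (Fin 3 → ℝ))) = 2 := by
  have hs : Set.range ![a, b] = ({a, b} : Set (Fin 3 → ℝ)) := by
    simp [Matrix.range_cons, Matrix.range_empty]
    exact Set.pair_comm b a
  have := finrank_span_eq_card h
  rw [hs] at this
  simpa using this

/-- For the rotational surfaces `S₁, S₂` generated by a curve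
`γ₁(t) = (t, 0, f(t))` and its affine reflection `γ₂(t) = (t − λf(t), 0, −f(t))`, at a
point with `t ≠ 0`, `t − λf(t) ≠ 0`, `f'(t) ≠ 0` and `λf'(t) ≠ 2`, the two tangent
planes are 2-dimensional, distinct, and intersect exactly in the line
`ℝ·(sin θ, −cos θ, 0)`. -/
theorem tangent_planes_of_rotational_surfaces (I : Set ℝ) (hI : IsOpen I)
    (hIc : I.OrdConnected) (f : ℝ → ℝ) (hf : ContDiffOn ℝ (⊤ : ℕ∞) f I) (lam : ℝ)
    (t θ : ℝ) (ht : t ∈ I) (ht0 : t ≠ 0) (ht1 : t - lam * f t ≠ 0)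
    (hft : deriv f t ≠ 0) (hl : lam * deriv f t ≠ 2) :
    let φ₁ : ℝ → ℝ → (Fin 3 → ℝ) := fun s α => ![s * Real.cos α, s * Real.sin α, f s]
    let φ₂ : ℝ → ℝ → (Fin 3 → ℝ) := fun s α =>
      ![(s - lam * f s) * Real.cos α, (s - lam * f s) * Real.sin α, -f s]
    let T₁ : Submodule ℝ (Fin 3 → ℝ) :=
      Submodule.span ℝ {deriv (fun s => φ₁ s θ) t, deriv (fun α => φ₁ t α) θ}
    let T₂ : Submodule ℝ (Fin 3 → ℝ) :=
      Submodule.span ℝ {deriv (fun s => φ₂ s θ) t, deriv (fun α => φ₂ t α) θ}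
    Module.finrank ℝ T₁ = 2 ∧ Module.finrank ℝ T₂ = 2 ∧ T₁ ≠ T₂ ∧
    T₁ ⊓ T₂ = Submodule.span ℝ {![Real.sin θ, -Real.cos θ, 0]} := by
  intro φ₁ φ₂ T₁ T₂
  set c := Real.cos θ with hc
  set s := Real.sin θ with hs
  set d := deriv f t with hd
  set r := t - lam * f t with hrdef
  -- differentiability of f at t
  have hfd : DifferentiableAt ℝ f t :=
    ((hf t ht).contDiffAt (hI.mem_nhds ht)).differentiableAt (by simp)
  have hf' : HasDerivAt f d t := hfd.hasDerivAt
  -- the four tangent vectors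
  set u₁ : Fin 3 → ℝ := ![1 * c, 1 * s, d] with hu₁
  set u₂ : Fin 3 → ℝ := ![-(t * s), t * c, 0] with hu₂
  set v₁ : Fin 3 → ℝ := ![(1 - lam * d) * c, (1 - lam * d) * s, -d] with hv₁
  set v₂ : Fin 3 → ℝ := ![-(r * s), r * c, 0] with hv₂
  -- compute the derivatives
  have D1t : deriv (fun x => φ₁ x θ) t = u₁ := by
    have : HasDerivAt (fun x => φ₁ x θ) u₁ t := by
      apply hasDerivAt_vec3
      · simpa using (hasDerivAt_id t).mul_const c
      · simpa using (hasDerivAt_id t).mul_const s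
      · exact hf'
    exact this.deriv
  have D1θ : deriv (fun α => φ₁ t α) θ = u₂ := by
    have : HasDerivAt (fun α => φ₁ t α) u₂ θ := by
      apply hasDerivAt_vec3
      · simpa [mul_comm, mul_assoc] using (Real.hasDerivAt_cos θ).const_mul t
      · simpa [mul_comm] using (Real.hasDerivAt_sin θ).const_mul t
      · exact hasDerivAt_const θ (f t)
    exact this.deriv
  have hrt : HasDerivAt (fun x => x - lam * f x) (1 - lam * d) t :=
    (hasDerivAt_id t).sub (hf'.const_mul lam)
  have D2t : deriv (fun x => φ₂ x θ) t = v₁ := by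
    have : HasDerivAt (fun x => φ₂ x θ) v₁ t := by
      apply hasDerivAt_vec3
      · exact hrt.mul_const c
      · exact hrt.mul_const s
      · exact hf'.neg
    exact this.deriv
  have D2θ : deriv (fun α => φ₂ t α) θ = v₂ := by
    have : HasDerivAt (fun α => φ₂ t α) v₂ θ := by
      apply hasDerivAt_vec3
      · simpa [mul_comm, mul_assoc] using (Real.hasDerivAt_cos θ).const_mul r
      · simpa [mul_comm] using (Real.hasDerivAt_sin θ).const_mul r
      · exact hasDerivAt_const θ (-f t)
    exact this.deriv
  have hT₁ : T₁ = span ℝ ({u₁, u₂} : Set (Fin 3 → ℝ)) := by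
    simp only [T₁, D1t, D1θ]
  have hT₂ : T₂ = span ℝ ({v₁, v₂} : Set (Fin 3 → ℝ)) := by
    simp only [T₂, D2t, D2θ]
  have hd2 : (1 : ℝ) - lam * d ≠ -1 := by
    intro h
    apply hl
    linarith
  -- linear independence
  have li₁ : LinearIndependent ℝ ![u₁, u₂] := pair_indep θ 1 d t hft ht0
  have li₂ : LinearIndependent ℝ ![v₁, v₂] := by
    have := pair_indep θ (1 - lam * d) (-d) r (neg_ne_zero.2 hft) ht1
    exact this
  have trig := Real.sin_sq_add_cos_sq θ
  refine ⟨?_, ?_, ?_, ?_⟩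
  · rw [hT₁]; exact finrank_span_pair li₁
  · rw [hT₂]; exact finrank_span_pair li₂
  · -- distinctness
    intro hEq
    have hmem : u₁ ∈ T₂ := by
      rw [← hEq, hT₁]
      exact subset_span (Set.mem_insert _ _)
    rw [hT₂, Submodule.mem_span_pair] at hmem
    obtain ⟨a, b, hab⟩ := hmem
    have h0 := congrFun hab 0
    have h1 := congrFun hab 1
    have h2 := congrFun hab 2
    simp [hu₁, hv₁, hv₂] at h0 h1 h2
    -- h2 : a * -d = d, so a = -1
    have ha : a = -1 := by
      have : (a + 1) * d = 0 := by linear_combination -h2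
      rcases mul_eq_zero.1 this with h | h
      · linarith
      · exact absurd h hft
    subst ha
    apply hl
    linear_combination c * h0 + s * h1 + (2 - lam * d) * trig
  · -- intersection
    set w : Fin 3 → ℝ := ![s, -c, 0] with hw
    apply le_antisymm
    · -- T₁ ⊓ T₂ ≤ span {w}
      intro x hx
      rw [Submodule.mem_inf, hT₁, hT₂] at hx
      obtain ⟨hx1, hx2⟩ := hx
      obtain ⟨a, b, hab⟩ := Submodule.mem_span_pair.1 hx1
      obtain ⟨a', b', hab'⟩ := Submodule.mem_span_pair.1 hx2
      have heq : a • u₁ + b • u₂ = a' • v₁ + b' • v₂ := hab.trans hab'.symm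
      have h0 := congrFun heq 0
      have h1 := congrFun heq 1
      have h2 := congrFun heq 2
      simp [hu₁, hu₂, hv₁, hv₂] at h0 h1 h2
      -- h2 : a * d = a' * -d
      have ha' : a' = -a := by
        have : (a + a') * d = 0 := by linear_combination h2
        rcases mul_eq_zero.1 this with h | h
        · linarith
        · exact absurd h hft
      subst ha'
      have ha : a = 0 := by
        have hcomb : a * (2 - lam * d) = 0 := by
          linear_combination c * h0 + s * h1 - (a * (2 - lam * d)) * trig
        rcases mul_eq_zero.1 hcomb with h | h
        · exact h
        · exfalso; apply hl; linarith
      subst ha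
      rw [Submodule.mem_span_singleton]
      refine ⟨-(b * t), ?_⟩
      rw [← hab]
      funext i
      fin_cases i <;> simp [hw, hu₁, hu₂] <;> ring
    · -- span {w} ≤ T₁ ⊓ T₂
      apply span_le.2
      rw [Set.singleton_subset_iff, SetLike.mem_coe, Submodule.mem_inf]
      constructor
      · rw [hT₁, Submodule.mem_span_pair]
        refine ⟨0, -t⁻¹, ?_⟩
        funext i
        fin_cases i <;> simp [hw, hu₁, hu₂] <;> field_simp <;> ring
      · rw [hT₂, Submodule.mem_span_pair]
        refine ⟨0, -r⁻¹, ?_⟩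
        funext i
        fin_cases i <;> simp [hw, hv₁, hv₂] <;> field_simp <;> ring
end
end

section
/- Let I ⊆ (0, ∞) be a nonempty interval, let f : I → ℝ be a smooth, strictly positive, injective function, let λ ≠ 0, and suppose there exists t₀ ∈ I with λf(t₀) ≠ 2t₀. Define S₁ = {(t cos θ, t sin θ, f(t)) : t ∈ I, θ ∈ ℝ} and S₂ = {((t − λf(t)) cos θ, (t − λf(t)) sin θ, −f(t)) : t ∈ I, θ ∈ ℝ}. Then there is no affine map T : ℝ³ → ℝ³ satisfying T ∘ T = id, T(X) = X for every X in the plane {z = 0}, and T(S₁) = S₂. In other words, although S₂ is obtained by rotating an affine reflection of the generating curve of S₁, the surface S₂ is not the image of S₁ under any affine reflection fixing the plane z = 0. -/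
noncomputable section

/-- **counter-example to the reflection property.** Although the
rotational surface `S₂` is generated by rotating an affine reflection of the generating
curve of `S₁`, the surface `S₂` is not the image of `S₁` under any affine reflection
fixing the plane `{z = 0}` pointwise. -/
theorem no_affine_reflection_of_rotational_surfaces (I : Set ℝ)
    (hIpos : I ⊆ Set.Ioi (0 : ℝ)) (hne : I.Nonempty) (hIc : I.OrdConnected)
    (f : ℝ → ℝ) (hf : ContDiffOn ℝ (⊤ : ℕ∞) f I) (hfpos : ∀ t ∈ I, 0 < f t)
    (hinj : Set.InjOn f I) (lam : ℝ) (hlam : lam ≠ 0)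
    (hex : ∃ t₀ ∈ I, lam * f t₀ ≠ 2 * t₀) :
    let S₁ : Set (Fin 3 → ℝ) :=
      {X | ∃ t ∈ I, ∃ θ : ℝ, X = ![t * Real.cos θ, t * Real.sin θ, f t]}
    let S₂ : Set (Fin 3 → ℝ) :=
      {X | ∃ t ∈ I, ∃ θ : ℝ,
        X = ![(t - lam * f t) * Real.cos θ, (t - lam * f t) * Real.sin θ, -f t]}
    ¬ ∃ T : (Fin 3 → ℝ) →ᵃ[ℝ] (Fin 3 → ℝ),
        (∀ X, T (T X) = X) ∧
        (∀ X : Fin 3 → ℝ, X 2 = 0 → T X = X) ∧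
        T '' S₁ = S₂ := by
  intro S₁ S₂
  rintro ⟨T, hinv, hfix, himg⟩
  obtain ⟨t₀, ht₀, hneq⟩ := hex
  have hFpos : 0 < f t₀ := hfpos t₀ ht₀
  have ht₀pos : 0 < t₀ := hIpos ht₀
  set F := f t₀ with hF
  set e₂ : Fin 3 → ℝ := ![0, 0, 1] with he₂
  set w : Fin 3 → ℝ := T.linear e₂ with hw
  -- T translates along e₂ by the vector w
  have hplane : ∀ p : Fin 3 → ℝ, ∀ c : ℝ, T (c • e₂ + p) = c • w + T p := by
    intro p c
    have h := T.map_vadd p (c • e₂)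
    simpa [vadd_eq_add, map_smul] using h
  have hT0 : T 0 = 0 := hfix 0 rfl
  have hTe₂ : T e₂ = w := by
    have h := hplane 0 1
    simpa [hT0] using h
  -- involution forces (w 2)^2 = 1
  have hc2 : w 2 * w 2 = 1 := by
    set wp : Fin 3 → ℝ := ![w 0, w 1, 0] with hwp
    have hdec : w = (w 2) • e₂ + wp := by
      funext i; fin_cases i <;> simp [he₂, hwp]
    have hpfix : T wp = wp := hfix wp (by simp [hwp])
    have h2 : T w = (w 2) • w + wp := by
      have h := hplane wp (w 2)
      rw [hpfix] at h
      rw [← hdec] at h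
      exact h
    have h3 : T w = e₂ := by rw [← hTe₂]; exact hinv e₂
    have h4 := congrFun (h2.symm.trans h3) 2
    simpa [he₂, hwp] using h4
  -- key equations from mapping circle points into S₂
  have key : ∀ θ : ℝ, ∃ s ∈ I,
      F * w 2 = -f s ∧
      (F * w 0 + t₀ * Real.cos θ) ^ 2 + (F * w 1 + t₀ * Real.sin θ) ^ 2
        = (s - lam * f s) ^ 2 := by
    intro θ
    have hmem : T ![t₀ * Real.cos θ, t₀ * Real.sin θ, F] ∈ S₂ := by
      rw [← himg]
      exact ⟨_, ⟨t₀, ht₀, θ, rfl⟩, rfl⟩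
    obtain ⟨s, hs, θ', hEq⟩ := hmem
    have hd : ![t₀ * Real.cos θ, t₀ * Real.sin θ, F]
        = F • e₂ + ![t₀ * Real.cos θ, t₀ * Real.sin θ, 0] := by
      funext i; fin_cases i <;> simp [he₂]
    have hTP : T ![t₀ * Real.cos θ, t₀ * Real.sin θ, F]
        = F • w + ![t₀ * Real.cos θ, t₀ * Real.sin θ, 0] := by
      rw [hd, hplane _ F, hfix _ (by simp)]
    rw [hTP] at hEq
    have h0 := congrFun hEq 0
    have h1 := congrFun hEq 1
    have h2 := congrFun hEq 2
    simp only [Pi.add_apply, Pi.smul_apply, smul_eq_mul, Matrix.cons_val_zero,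
      Matrix.cons_val_one, Matrix.head_cons, Matrix.cons_val_two, Matrix.tail_cons] at h0 h1 h2
    refine ⟨s, hs, by linarith, ?_⟩
    have hθ' := Real.sin_sq_add_cos_sq θ'
    rw [h0, h1]
    linear_combination ((s - lam * f s) ^ 2) * hθ'
  -- deduce w 2 = -1
  obtain ⟨s0, hs0, hz0, he0⟩ := key 0
  have hcneg : w 2 < 0 := by
    have := hfpos s0 hs0
    nlinarith
  have hw2 : w 2 = -1 := by
    have h5 : (w 2 + 1) * (w 2 - 1) = 0 := by linear_combination hc2
    rcases mul_eq_zero.mp h5 with h | h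
    · linarith
    · linarith
  -- each s equals t₀
  have hsub : ∀ s ∈ I, F * w 2 = -f s → s = t₀ := by
    intro s hs hz
    refine hinj hs ht₀ ?_
    rw [hw2] at hz
    linarith
  rw [hsub s0 hs0 hz0] at he0
  obtain ⟨s1, hs1, hz1, he1⟩ := key Real.pi
  rw [hsub s1 hs1 hz1] at he1
  obtain ⟨s2, hs2, hz2, he2⟩ := key (Real.pi / 2)
  rw [hsub s2 hs2 hz2] at he2
  obtain ⟨s3, hs3, hz3, he3⟩ := key (-(Real.pi / 2))
  rw [hsub s3 hs3 hz3] at he3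
  simp only [Real.cos_zero, Real.sin_zero, Real.cos_pi, Real.sin_pi,
    Real.cos_pi_div_two, Real.sin_pi_div_two, Real.cos_neg, Real.sin_neg] at he0 he1 he2 he3
  have ha : F * w 0 = 0 := by
    have h4 : (4 * t₀) * (F * w 0) = 0 := by linear_combination he0 - he1
    rcases mul_eq_zero.mp h4 with h | h
    · linarith
    · exact h
  have hb : F * w 1 = 0 := by
    have h4 : (4 * t₀) * (F * w 1) = 0 := by linear_combination he2 - he3
    rcases mul_eq_zero.mp h4 with h | h
    · linarith
    · exact h
  have h5 : (lam * F) * (lam * F - 2 * t₀) = 0 := by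
    linear_combination (F * w 0 + 2 * t₀) * ha + (F * w 1) * hb - he0
  rcases mul_eq_zero.mp h5 with h | h
  · exact absurd h (mul_ne_zero hlam (ne_of_gt hFpos))
  · exact hneq (by linarith)
end
end
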